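/- Let k > 0, T > 0, c_F > 0, b_0 > 1/c_F with k > log(b_0·c_F)/T, and set t_0 = T - log(b_0·c_F)/k ∈ (0, T). For the control β*(t) = b_0 for t < t_0 and β*(t) = e^{k(T-t)}/c_F for t ∈ [t_0, T], the solution X̃ of X̃'(t) = k·X̃(t) + β*(t) - (1/c_F)·e^{k(T-t)}, X̃(0) = 0, is given by X̃(t) = (b_0/k)(e^{kt} - 1) - (e^{kT}/(2k·c_F))(e^{kt} - e^{-kt}) for t ∈ [0, t_0], and X̃(t) = e^{k(t - t_0)}·X̃(t_0) for t ∈ [t_0, T]; moreover X̃(t) ≤ 0 for all t ∈ [0, T]. -/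

import Mathlib

open Set

theorem stmt_16 (k T cF b0 : ℝ) (hk0 : 0 < k) (hT : 0 < T) (hcF : 0 < cF)
    (hb0 : 1 / cF < b0) (hk : Real.log (b0 * cF) / T < k)
    (Xt : ℝ → ℝ) (hX0 : Xt 0 = 0)
    (hODE : ∀ t ∈ Set.Icc (0:ℝ) T,
      HasDerivAt Xt (k * Xt t +
        (if t < T - Real.log (b0 * cF) / k then b0 else Real.exp (k * (T - t)) / cF)
        - Real.exp (k * (T - t)) / cF) t) :
    let t0 : ℝ := T - Real.log (b0 * cF) / k
    (0 < t0 ∧ t0 < T) ∧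
    (∀ t ∈ Set.Icc (0:ℝ) t0,
      Xt t = b0 / k * (Real.exp (k * t) - 1)
        - Real.exp (k * T) / (2 * k * cF) * (Real.exp (k * t) - Real.exp (-(k * t)))) ∧
    (∀ t ∈ Set.Icc t0 T, Xt t = Real.exp (k * (t - t0)) * Xt t0) ∧
    (∀ t ∈ Set.Icc (0:ℝ) T, Xt t ≤ 0) := by
  intro t0
  have hb0' : 0 < b0 := lt_trans (by positivity) hb0
  have hbc1 : 1 < b0 * cF := by
    rw [div_lt_iff₀ hcF] at hb0; linarith
  have hbc0 : 0 < b0 * cF := by linarith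
  have hlogpos : 0 < Real.log (b0 * cF) := Real.log_pos hbc1
  have hlogT : Real.log (b0 * cF) < k * T := by
    rw [div_lt_iff₀ hT] at hk; linarith
  have ht0pos : 0 < t0 := by
    have : Real.log (b0 * cF) / k < T := by
      rw [div_lt_iff₀ hk0]; linarith [hlogT]; 
    simp only [t0]; linarith
  have ht0T : t0 < T := by
    have : 0 < Real.log (b0 * cF) / k := div_pos hlogpos hk0
    simp only [t0]; linarith
  have hkt0 : k * (T - t0) = Real.log (b0 * cF) := by
    simp only [t0]; field_simp; ring
  have hexpt0 : Real.exp (k * (T - t0)) = b0 * cF := by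
    rw [hkt0, Real.exp_log hbc0]
  -- definitions
  set C : ℝ := Real.exp (k * T) / (2 * k * cF) with hC
  set P1 : ℝ → ℝ := fun t => b0 / k * (Real.exp (k * t) - 1)
      - C * (Real.exp (k * t) - Real.exp (-(k * t))) with hP1
  set A : ℝ := P1 t0 with hA
  set P2 : ℝ → ℝ := fun t => Real.exp (k * (t - t0)) * A with hP2
  set Y : ℝ → ℝ := fun t => if t < t0 then P1 t else P2 t with hY
  have hP2t0 : P2 t0 = A := by simp [hP2]
  have hYt0 : Y t0 = A := by simp [hY, hP2t0]
  -- derivative of P1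
  have hdP1 : ∀ t : ℝ, HasDerivAt P1
      (k * P1 t + b0 - Real.exp (k * (T - t)) / cF) t := by
    intro t
    have h1 : HasDerivAt (fun t : ℝ => Real.exp (k * t)) (k * Real.exp (k * t)) t := by
      simpa [mul_comm, Function.comp_def] using (Real.hasDerivAt_exp (k * t)).comp t ((hasDerivAt_id t).const_mul k)
    have h2 : HasDerivAt (fun t : ℝ => Real.exp (-(k * t))) (-k * Real.exp (-(k * t))) t := by
      simpa [mul_comm, Function.comp_def] using (Real.hasDerivAt_exp (-(k * t))).comp t
        (((hasDerivAt_id t).const_mul k).neg)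
    have h : HasDerivAt P1
        (b0 / k * (k * Real.exp (k * t)) - C * (k * Real.exp (k * t) - -k * Real.exp (-(k * t)))) t :=
      (((h1.sub_const 1).const_mul (b0 / k)).sub ((h1.sub h2).const_mul C))
    convert h using 1
    have hexp : Real.exp (k * (T - t)) = Real.exp (k * T) * Real.exp (-(k * t)) := by
      rw [← Real.exp_add]; ring_nf
    simp only [hP1]
    rw [hexp, hC]
    field_simp
    ring
  have hdP2 : ∀ t : ℝ, HasDerivAt P2 (k * P2 t) t := by
    intro t
    have h1 : HasDerivAt (fun t : ℝ => Real.exp (k * (t - t0)))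
        (k * Real.exp (k * (t - t0))) t := by
      simpa [mul_comm, Function.comp_def] using (Real.hasDerivAt_exp (k * (t - t0))).comp t
        (((hasDerivAt_id t).sub_const t0).const_mul k)
    simpa [hP2, mul_assoc] using h1.mul_const A
  -- derivative of Y
  have hdY : ∀ t : ℝ, HasDerivAt Y
      (k * Y t + (if t < t0 then b0 else Real.exp (k * (T - t)) / cF)
        - Real.exp (k * (T - t)) / cF) t := by
    intro t
    rcases lt_trichotomy t t0 with h | h | h
    · have heq : Y =ᶠ[nhds t] P1 := by
        filter_upwards [Iio_mem_nhds h] with x hx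
        simp only [hY]
        rw [if_pos (mem_Iio.mp hx)]
      rw [if_pos h]
      have := (hdP1 t).congr_of_eventuallyEq heq
      simpa [hY, if_pos h] using this
    · rw [h]
      have hd1 : HasDerivWithinAt Y (k * A) (Iic t0) t0 := by
        have hP1d : k * P1 t0 + b0 - Real.exp (k * (T - t0)) / cF = k * A := by
          rw [hexpt0, ← hA, mul_div_assoc, div_self hcF.ne', mul_one]; ring
        have := ((hdP1 t0).hasDerivWithinAt (s := Iic t0))
        rw [hP1d] at this
        exact this.congr (fun y hy => by
          rcases lt_or_eq_of_le (mem_Iic.mp hy) with h' | h'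
          · simp only [hY]; rw [if_pos h']
          · rw [h', hYt0, hA]) (by rw [hYt0, hA])
      have hd2 : HasDerivWithinAt Y (k * A) (Ici t0) t0 := by
        have := ((hdP2 t0).hasDerivWithinAt (s := Ici t0))
        rw [hP2t0] at this
        exact this.congr (fun y hy => by
          simp only [hY]
          rw [if_neg (not_lt.mpr (mem_Ici.mp hy))]) (by rw [hYt0, hP2t0])
      have := hd1.union hd2
      rw [Iic_union_Ici, hasDerivWithinAt_univ] at this
      simpa [hYt0, lt_irrefl] using this
    · have heq : Y =ᶠ[nhds t] P2 := by
        filter_upwards [Ioi_mem_nhds h] with x hx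
        simp only [hY]
        rw [if_neg (not_lt.mpr (le_of_lt (mem_Ioi.mp hx)))]
      rw [if_neg (not_lt.mpr h.le)]
      have := (hdP2 t).congr_of_eventuallyEq heq
      simpa [hY, not_lt.mpr h.le] using this
  -- Z = exp(-kt)(X - Y) is constant 0
  have hXY : ∀ t ∈ Icc (0:ℝ) T, Xt t = Y t := by
    set Z : ℝ → ℝ := fun t => Real.exp (-(k * t)) * (Xt t - Y t) with hZdef
    have hdZ : ∀ t ∈ Icc (0:ℝ) T, HasDerivAt Z 0 t := by
      intro t ht
      have hXd := hODE t ht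
      have hdiff : HasDerivAt (fun t => Xt t - Y t) (k * (Xt t - Y t)) t := by
        have := hXd.sub (hdY t)
        exact this.congr_deriv (by simp only [t0]; ring)
      have he : HasDerivAt (fun t : ℝ => Real.exp (-(k * t)))
          (-k * Real.exp (-(k * t))) t := by
        simpa [mul_comm, Function.comp_def] using (Real.hasDerivAt_exp (-(k * t))).comp t
          (((hasDerivAt_id t).const_mul k).neg)
      have := he.mul hdiff
      exact this.congr_deriv (by ring)
    have hcont : ContinuousOn Z (Icc 0 T) := fun t ht =>
      (hdZ t ht).continuousAt.continuousWithinAt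
    have hconst := constant_of_has_deriv_right_zero hcont
      (fun t ht => (hdZ t (Ico_subset_Icc_self ht)).hasDerivWithinAt)
    intro t ht
    have hZt := hconst t ht
    have hY0 : Y 0 = 0 := by simp [hY, ht0pos, hP1]
    have hZ0 : Z 0 = 0 := by simp [hZdef, hX0, hY0]
    rw [hZ0] at hZt
    have hne : Real.exp (-(k * t)) ≠ 0 := Real.exp_ne_zero _
    have := mul_eq_zero.mp hZt
    rcases this with h | h
    · exact absurd h hne
    · linarith
  -- nonpositivity of P1 on [0, t0]
  have hP1neg : ∀ t ∈ Icc (0:ℝ) t0, P1 t ≤ 0 := by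
    intro t ht
    obtain ⟨ht1, ht2⟩ := ht
    set u : ℝ := Real.exp (k * t) with hu
    have hu1 : 1 ≤ u := by
      rw [hu, ← Real.exp_zero]
      exact Real.exp_le_exp.mpr (by positivity)
    have hun : Real.exp (-(k * t)) = u⁻¹ := by rw [hu, ← Real.exp_neg]
    have hu0 : 0 < u := Real.exp_pos _
    have hkey : b0 * cF * u ≤ Real.exp (k * T) := by
      have : b0 * cF ≤ Real.exp (k * (T - t)) := by
        rw [← hexpt0]
        exact Real.exp_le_exp.mpr (by nlinarith)
      have hsplit : Real.exp (k * (T - t)) * u = Real.exp (k * T) := by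
        rw [hu, ← Real.exp_add]; ring_nf
      nlinarith
    simp only [hP1, ← hu, hun, hC]
    rw [sub_nonpos]
    have hE : 0 < Real.exp (k * T) := Real.exp_pos _
    rw [div_mul_eq_mul_div, div_mul_eq_mul_div, div_le_div_iff₀ hk0 (by positivity)]
    have huv : u * u⁻¹ = 1 := mul_inv_cancel₀ (ne_of_gt hu0)
    have h1 : 0 ≤ k * (u - 1) * (Real.exp (k * T) - b0 * cF * u) :=
      mul_nonneg (mul_nonneg hk0.le (sub_nonneg.2 hu1)) (sub_nonneg.2 hkey)
    have h2 : 0 ≤ k * Real.exp (k * T) * (u - 1) * (u - 1) :=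
      mul_nonneg (mul_nonneg (mul_nonneg hk0.le hE.le) (sub_nonneg.2 hu1)) (sub_nonneg.2 hu1)
    have key2 : b0 * (u - 1) * (2 * k * cF) * u ≤ Real.exp (k * T) * (u - u⁻¹) * k * u := by
      have expand : Real.exp (k * T) * (u - u⁻¹) * k * u
          = k * Real.exp (k * T) * u ^ 2 - k * Real.exp (k * T) := by
        field_simp
      rw [expand]
      nlinarith [h1, h2]
    exact le_of_mul_le_mul_right key2 hu0
  -- conclusions
  refine ⟨⟨ht0pos, ht0T⟩, ?_, ?_, ?_⟩
  · intro t ht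
    obtain ⟨ht1, ht2⟩ := ht
    have htT : t ∈ Icc (0:ℝ) T := ⟨ht1, le_trans ht2 ht0T.le⟩
    rw [hXY t htT]
    rcases lt_or_eq_of_le ht2 with h | h
    · simp [hY, h, hP1, hC]
    · subst h
      rw [hYt0, hA]
  · intro t ht
    obtain ⟨ht1, ht2⟩ := ht
    have htT : t ∈ Icc (0:ℝ) T := ⟨le_trans ht0pos.le ht1, ht2⟩
    have ht0T' : t0 ∈ Icc (0:ℝ) T := ⟨ht0pos.le, ht0T.le⟩
    rw [hXY t htT, hXY t0 ht0T', hYt0]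
    simp [hY, not_lt.mpr ht1, hP2]
  · intro t ht
    rw [hXY t ht]
    rcases lt_or_ge t t0 with h | h
    · have : P1 t ≤ 0 := hP1neg t ⟨ht.1, h.le⟩
      simpa [hY, h] using this
    · have hA0 : A ≤ 0 := hP1neg t0 ⟨ht0pos.le, le_refl _⟩
      have : Y t = Real.exp (k * (t - t0)) * A := by simp [hY, not_lt.mpr h, hP2]
      rw [this]
      exact mul_nonpos_of_nonneg_of_nonpos (Real.exp_pos _).le hA0
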